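/- Restricted cone and cross-polytope property of the dual minimizer (Lemma E.8): let n, d ≥ 1, a₀ > 1, γ, ν, κ > 0, r ∈ [0,1), x ∈ ℝ^d, X₁,…,Xₙ ∈ ℝ^d, and π̂₁,…,π̂ₙ ≥ 0. Let ℓ₀ ∈ ℝ^d satisfy ‖ℓ₀‖₂ ≤ 2‖x‖₂/κ², let S ⊆ {1,…,d}, and let ℓ̃ be the coordinate restriction of ℓ₀ to S (ℓ̃ₖ = (ℓ₀)ₖ for k ∈ S, ℓ̃ₖ = 0 otherwise) with ‖ℓ̃ − ℓ₀‖₂ ≤ r·‖ℓ₀‖₂. Let ℓ̂ be a minimizer over ℓ ∈ ℝ^d of G(ℓ) := (1/(4n))Σᵢ₌₁ⁿ π̂ᵢ(Xᵢᵀℓ)² + xᵀℓ + (γ/n)‖ℓ‖₁. Assume: (i) ‖(1/(2n))Σᵢ₌₁ⁿ π̂ᵢ(Xᵢᵀℓ₀)Xᵢ + x‖∞ ≤ γ/(a₀n), and (ii) (1/n)Σᵢ₌₁ⁿ π̂ᵢ(Xᵢᵀ(ℓ̃ − ℓ₀))² ≤ ν·r²·‖ℓ₀‖₂²/(a₀n).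 Then ‖(ℓ̂ − ℓ̃)_{S^c}‖₁ ≤ (r²·‖x‖₂²/((a₀−1)·κ⁴))·(ν/γ) + ((a₀+1)/(a₀−1))·‖(ℓ̂ − ℓ̃)_S‖₁; in particular, either ℓ̂ − ℓ̃ ∈ C₁(S, 2(a₀+1)/(a₀−1)) or ‖ℓ̂ − ℓ̃‖₁ ≤ ((a₀²+1)·r²·‖x‖₂²/((a₀−1)·κ⁴))·(ν/γ). -/

import Mathlib

open MeasureTheory ProbabilityTheory Filter Finset Asymptotics
open scoped ENNReal NNReal Topology Classical

noncomputable section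

/-- Euclidean dot product on `ℝ^m`. -/
def dot {m : ℕ} (u v : Fin m → ℝ) : ℝ := ∑ j, u j * v j

/-- ℓ¹-norm on `ℝ^m`. -/
def l1 {m : ℕ} (v : Fin m → ℝ) : ℝ := ∑ j, |v j|

/-- ℓ²-norm on `ℝ^m`. -/
def l2 {m : ℕ} (v : Fin m → ℝ) : ℝ := Real.sqrt (∑ j, v j ^ 2)

/-- max-norm on `ℝ^m`. -/
def linf {m : ℕ} (v : Fin m → ℝ) : ℝ := ⨆ j, |v j|

/-- number of nonzero coordinates. -/
def l0 {m : ℕ} (v : Fin m → ℝ) : ℕ := (Finset.univ.filter fun j => v j ≠ 0).card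

/-- coordinate restriction of a vector to an index set. -/
def restr {m : ℕ} (S : Finset (Fin m)) (v : Fin m → ℝ) : Fin m → ℝ :=
  fun j => if j ∈ S then v j else 0

/-- cone of dominant coordinates w.r.t. the ℓ¹-norm. -/
def cone1 {m : ℕ} (S : Finset (Fin m)) (t : ℝ) : Set (Fin m → ℝ) :=
  {v | l1 (restr Sᶜ v) ≤ t * l1 (restr S v)}

/-- cone of dominant coordinates w.r.t. the ℓ²-norm. -/
def cone2 {m : ℕ} (S : Finset (Fin m)) (t : ℝ) : Set (Fin m → ℝ) :=
  {v | l2 (restr Sᶜ v) ≤ t * l2 (restr S v)}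

/-- ψ_a-Orlicz norm of a real random variable (with `sInf ∅ = ∞`). -/
def psiNorm {Ω : Type*} [MeasurableSpace Ω] (a : ℝ) (μ : Measure Ω) (Z : Ω → ℝ) : ℝ≥0∞ :=
  sInf {t : ℝ≥0∞ | 0 < t ∧ t ≠ ∞ ∧
    ∫⁻ ω, ENNReal.ofReal (Real.exp (|Z ω| ^ a / t.toReal ^ a)) ∂μ ≤ 2}

/-- sub-Gaussian random vector with constant `K`. -/
def SubGaussian {Ω : Type*} [MeasurableSpace Ω] {m : ℕ} (μ : Measure Ω)
    (X : Ω → Fin m → ℝ) (K : ℝ) : Prop :=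
  ∀ u : Fin m → ℝ,
    psiNorm 2 μ (fun ω => dot u (X ω)) ≤
      ENNReal.ofReal (K * Real.sqrt (∫ ω, dot u (X ω) ^ 2 ∂μ))

/-- `s`-sparse maximum eigenvalue of `E[X Xᵀ]`. -/
def sparseEig {Ω : Type*} [MeasurableSpace Ω] {m : ℕ} (μ : Measure Ω)
    (X : Ω → Fin m → ℝ) (s : ℕ) : ℝ :=
  sSup {r : ℝ | ∃ u : Fin m → ℝ, l2 u = 1 ∧ l0 u ≤ s ∧ r = ∫ ω, dot (X ω) u ^ 2 ∂μ}

/-- complete-case population gram matrix `E[R X Xᵀ]`. -/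
def gramCC {Ω : Type*} [MeasurableSpace Ω] {m : ℕ} (μ : Measure Ω)
    (R : Ω → ℝ) (X : Ω → Fin m → ℝ) : Matrix (Fin m) (Fin m) ℝ :=
  Matrix.of fun j k => ∫ ω, R ω * X ω j * X ω k ∂μ

/-
Write `v = ℓHat - ℓt` and `g` for the gradient at `ℓ₀` of the smooth part of the objective `G`.
Expanding the quadratic part of `G ℓHat ≤ G ℓt` around `ℓ₀` and absorbing the cross term
`⟪Xᵢ, ℓt - ℓ₀⟫⟪Xᵢ, v⟫` by completing a square gives the basic inequality
`⟪g, v⟫ + (γ/n)(‖ℓHat‖₁ - ‖ℓt‖₁) ≤ (1/(4n)) ∑ πᵢ ⟪Xᵢ, ℓt - ℓ₀⟫²`.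
By Hölder and (i), `⟪g, v⟫ ≥ -(γ/(a₀n))‖v‖₁`; since `ℓt` is supported on `S`,
`‖ℓHat‖₁ - ‖ℓt‖₁ ≥ ‖v_{Sᶜ}‖₁ - ‖v_S‖₁`. Together with (ii) and `‖ℓ₀‖₂ ≤ 2‖x‖₂/κ²` this yields
`(a₀ - 1)‖v_{Sᶜ}‖₁ ≤ (a₀ + 1)‖v_S‖₁ + r²‖x‖₂²ν/(κ⁴γ)`. Outside the cone `C₁(S, 2c)`,
`c = (a₀ + 1)/(a₀ - 1)`, the term `c‖v_S‖₁` is less than half of `‖v_{Sᶜ}‖₁`, so both parts of `v` are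
bounded by multiples of the error term.
-/

section Norms

variable {m : ℕ}

theorem dot_eq_dotProduct (u v : Fin m → ℝ) : dot u v = u ⬝ᵥ v := rfl

theorem l1_nonneg (v : Fin m → ℝ) : 0 ≤ l1 v :=
  sum_nonneg fun _ _ => abs_nonneg _

theorem l2_nonneg (v : Fin m → ℝ) : 0 ≤ l2 v :=
  Real.sqrt_nonneg _

theorem l1_eq_l1_restr_add_l1_restr_compl (S : Finset (Fin m)) (v : Fin m → ℝ) :
    l1 v = l1 (restr S v) + l1 (restr Sᶜ v) := by
  simp only [l1, restr, ← sum_add_distrib]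
  refine sum_congr rfl fun j _ => ?_
  by_cases hj : j ∈ S <;> simp [hj]

theorem l1_restr_compl_sub_l1_restr_le (S : Finset (Fin m)) (w z : Fin m → ℝ) :
    l1 (restr Sᶜ (w - restr S z)) - l1 (restr S (w - restr S z)) ≤ l1 w - l1 (restr S z) := by
  simp only [l1, restr, Pi.sub_apply, ← sum_sub_distrib]
  refine sum_le_sum fun j _ => ?_
  by_cases hj : j ∈ S
  · simp only [hj, if_true, Finset.mem_compl, not_true_eq_false, if_false, abs_zero]
    linarith [abs_sub_abs_le_abs_sub (z j) (w j), abs_sub_comm (z j) (w j)]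
  · simp [hj]

theorem abs_dot_le_linf_mul_l1 (g v : Fin m → ℝ) : |dot g v| ≤ linf g * l1 v := by
  rw [l1, mul_sum]
  refine (abs_sum_le_sum_abs _ _).trans (sum_le_sum fun j _ => ?_)
  rw [abs_mul]
  exact mul_le_mul_of_nonneg_right
    (le_ciSup (f := fun j => |g j|) (Set.finite_range _).bddAbove j) (abs_nonneg _)

theorem mem_cone1_or_l1_le {S : Finset (Fin m)} {v : Fin m → ℝ} {A c : ℝ} (hc : 0 < c)
    (h : l1 (restr Sᶜ v) ≤ A + c * l1 (restr S v)) :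
    v ∈ cone1 S (2 * c) ∨ l1 v ≤ (2 + 1 / c) * A := by
  refine or_iff_not_imp_left.mpr fun hv => ?_
  have hv : 2 * c * l1 (restr S v) < l1 (restr Sᶜ v) := not_le.mp hv
  have hs := l1_nonneg (restr S v)
  have hcs : c * l1 (restr S v) ≤ A := by nlinarith
  have hs_le : l1 (restr S v) ≤ 1 / c * A := by
    rw [div_mul_eq_mul_div, one_mul, le_div_iff₀ hc]; linarith
  rw [l1_eq_l1_restr_add_l1_restr_compl S v]
  linarith

theorem l1_restr_compl_le_and_mem_cone1_or_l1_le {S : Finset (Fin m)} {v : Fin m → ℝ}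
    {a A : ℝ} (ha : 1 < a) (hA : 0 ≤ A)
    (h : (a - 1) * l1 (restr Sᶜ v) ≤ (a + 1) * l1 (restr S v) + (a - 1) * A) :
    l1 (restr Sᶜ v) ≤ A + (a + 1) / (a - 1) * l1 (restr S v) ∧
      (v ∈ cone1 S (2 * (a + 1) / (a - 1)) ∨ l1 v ≤ (a ^ 2 + 1) * A) := by
  have ha' : 0 < a - 1 := sub_pos.mpr ha
  have hcompl : l1 (restr Sᶜ v) ≤ A + (a + 1) / (a - 1) * l1 (restr S v) := by
    rw [div_mul_eq_mul_div, ← sub_le_iff_le_add', le_div_iff₀ ha']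
    linarith
  have hc : 2 + 1 / ((a + 1) / (a - 1)) ≤ a ^ 2 + 1 := by
    have : (a - 1) / (a + 1) ≤ a ^ 2 - 1 := by
      rw [div_le_iff₀ (by positivity)]
      nlinarith
    rw [one_div_div]
    linarith
  refine ⟨hcompl, (mem_cone1_or_l1_le (by positivity) hcompl).imp
    (by rw [mul_div_assoc]; exact id) fun h => h.trans (mul_le_mul_of_nonneg_right hc hA)⟩

end Norms

section DualObjective

variable {n d : ℕ} (piHat : Fin n → ℝ) (X : Fin n → Fin d → ℝ) (x : Fin d → ℝ)

def dualObjective (γ : ℝ) (ℓ : Fin d → ℝ) : ℝ :=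
  (1 / (4 * n)) * ∑ i, piHat i * dot (X i) ℓ ^ 2 + dot x ℓ + (γ / n) * l1 ℓ

/-- The gradient at `ℓ₀` of the smooth part of `dualObjective`. -/
def smoothGrad (ℓ₀ : Fin d → ℝ) : Fin d → ℝ :=
  fun j => (1 / (2 * n)) * ∑ i, piHat i * dot (X i) ℓ₀ * X i j + x j

theorem dot_smoothGrad (ℓ₀ v : Fin d → ℝ) :
    dot (smoothGrad piHat X x ℓ₀) v
      = (1 / (2 * n)) * ∑ i, piHat i * dot (X i) ℓ₀ * dot (X i) v + dot x v := by
  simp only [smoothGrad, dot, add_mul, sum_add_distrib, mul_sum, sum_mul]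
  rw [sum_comm]
  simp only [mul_assoc]

theorem sum_weighted_sq_expansion_le (hpi : ∀ i, 0 ≤ piHat i) (ℓ₀ ℓ v : Fin d → ℝ) :
    ∑ i, piHat i * dot (X i) ℓ ^ 2 + 2 * ∑ i, piHat i * dot (X i) ℓ₀ * dot (X i) v
        - ∑ i, piHat i * dot (X i) (ℓ - ℓ₀) ^ 2
      ≤ ∑ i, piHat i * dot (X i) (ℓ + v) ^ 2 := by
  rw [mul_sum, ← sum_add_distrib, ← sum_sub_distrib]
  refine sum_le_sum fun i _ => ?_
  simp only [dot_eq_dotProduct, dotProduct_add, dotProduct_sub]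
  -- `(a + v)² - a² - 2 a₀ v + (a - a₀)² = (a - a₀ + v)² ≥ 0`
  nlinarith [mul_nonneg (hpi i) (sq_nonneg (X i ⬝ᵥ ℓ - X i ⬝ᵥ ℓ₀ + X i ⬝ᵥ v))]

theorem dot_smoothGrad_add_le_of_dualObjective_le (hpi : ∀ i, 0 ≤ piHat i) {γ : ℝ}
    (ℓ₀ : Fin d → ℝ) {ℓ ℓHat : Fin d → ℝ}
    (hle : dualObjective piHat X x γ ℓHat ≤ dualObjective piHat X x γ ℓ) :
    dot (smoothGrad piHat X x ℓ₀) (ℓHat - ℓ) + (γ / n) * (l1 ℓHat - l1 ℓ)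
      ≤ (1 / (4 * n)) * ∑ i, piHat i * dot (X i) (ℓ - ℓ₀) ^ 2 := by
  have hexp := mul_le_mul_of_nonneg_left
    (sum_weighted_sq_expansion_le piHat X hpi ℓ₀ ℓ (ℓHat - ℓ))
    (by positivity : (0 : ℝ) ≤ 1 / (4 * n))
  rw [add_sub_cancel] at hexp
  rw [dot_smoothGrad, dot_eq_dotProduct x, dotProduct_sub, ← dot_eq_dotProduct,
    ← dot_eq_dotProduct]
  unfold dualObjective at hle
  have h2 : (1 / (2 * (n : ℝ))) = 2 * (1 / (4 * n)) := by ring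
  rw [h2]
  linarith

theorem l1_restr_compl_le_of_dualObjective_le (hn : 0 < n) (hpi : ∀ i, 0 ≤ piHat i)
    {γ a₀ : ℝ} (hγ : 0 < γ) (ha₀ : 0 < a₀) (S : Finset (Fin d)) (ℓ₀ ℓHat : Fin d → ℝ)
    (hle : dualObjective piHat X x γ ℓHat ≤ dualObjective piHat X x γ (restr S ℓ₀))
    (hgrad : linf (smoothGrad piHat X x ℓ₀) ≤ γ / (a₀ * n)) :
    (a₀ - 1) * l1 (restr Sᶜ (ℓHat - restr S ℓ₀))
      ≤ (a₀ + 1) * l1 (restr S (ℓHat - restr S ℓ₀))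
        + a₀ / (4 * γ) * ∑ i, piHat i * dot (X i) (restr S ℓ₀ - ℓ₀) ^ 2 := by
  have hbasic := dot_smoothGrad_add_le_of_dualObjective_le piHat X x hpi ℓ₀ hle
  have hdot := neg_le_of_abs_le <| (abs_dot_le_linf_mul_l1 _ _).trans
    (mul_le_mul_of_nonneg_right hgrad (l1_nonneg (ℓHat - restr S ℓ₀)))
  rw [l1_eq_l1_restr_add_l1_restr_compl S] at hdot
  have hsparse := mul_le_mul_of_nonneg_left (l1_restr_compl_sub_l1_restr_le S ℓHat ℓ₀)
    (by positivity : 0 ≤ γ / n)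
  have hn' : (0 : ℝ) < n := by exact_mod_cast hn
  set s := l1 (restr S (ℓHat - restr S ℓ₀))
  set t := l1 (restr Sᶜ (ℓHat - restr S ℓ₀))
  have h : γ / n * (t - s) - γ / (a₀ * n) * (s + t)
      ≤ 1 / (4 * n) * ∑ i, piHat i * dot (X i) (restr S ℓ₀ - ℓ₀) ^ 2 := by
    linarith
  field_simp at h ⊢
  linarith

end DualObjective

theorem restricted_cone_and_cross_polytope_general
    (n d : ℕ) (hn : 1 ≤ n) (a₀ γ ν κ r : ℝ)
    (ha₀ : 1 < a₀) (hγ : 0 < γ) (hν : 0 < ν) (hκ : 0 < κ)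
    (x : Fin d → ℝ) (X : Fin n → Fin d → ℝ) (piHat : Fin n → ℝ) (hpi : ∀ i, 0 ≤ piHat i)
    (ℓ₀ : Fin d → ℝ) (hℓ₀ : l2 ℓ₀ ≤ 2 * l2 x / κ ^ 2)
    (S : Finset (Fin d)) (ℓt : Fin d → ℝ) (hℓt : ℓt = restr S ℓ₀)
    (ℓHat : Fin d → ℝ)
    (hmin : ∀ ℓ : Fin d → ℝ,
      (1 / (4 * n)) * ∑ i, piHat i * dot (X i) ℓHat ^ 2 + dot x ℓHat + (γ / n) * l1 ℓHat
        ≤ (1 / (4 * n)) * ∑ i, piHat i * dot (X i) ℓ ^ 2 + dot x ℓ + (γ / n) * l1 ℓ)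
    (hi : linf (fun j => (1 / (2 * n)) * ∑ i, piHat i * dot (X i) ℓ₀ * X i j + x j)
        ≤ γ / (a₀ * n))
    (hii : (1 / (n : ℝ)) * ∑ i, piHat i * dot (X i) (fun j => ℓt j - ℓ₀ j) ^ 2
        ≤ ν * r ^ 2 * l2 ℓ₀ ^ 2 / (a₀ * n)) :
    l1 (restr Sᶜ (fun j => ℓHat j - ℓt j))
      ≤ (r ^ 2 * l2 x ^ 2 / ((a₀ - 1) * κ ^ 4)) * (ν / γ)
        + ((a₀ + 1) / (a₀ - 1)) * l1 (restr S (fun j => ℓHat j - ℓt j)) ∧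
    ((fun j => ℓHat j - ℓt j) ∈ cone1 S (2 * (a₀ + 1) / (a₀ - 1)) ∨
      l1 (fun j => ℓHat j - ℓt j)
        ≤ ((a₀ ^ 2 + 1) * r ^ 2 * l2 x ^ 2 / ((a₀ - 1) * κ ^ 4)) * (ν / γ)) := by
  subst hℓt
  simp only [← Pi.sub_def] at hii ⊢
  have hcone := l1_restr_compl_le_of_dualObjective_le piHat X x hn hpi hγ (by linarith) S ℓ₀
    ℓHat (hmin (restr S ℓ₀)) hi
  have hℓ₀sq : l2 ℓ₀ ^ 2 * κ ^ 4 ≤ 4 * l2 x ^ 2 := by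
    calc l2 ℓ₀ ^ 2 * κ ^ 4 = (l2 ℓ₀ * κ ^ 2) ^ 2 := by ring
      _ ≤ (2 * l2 x) ^ 2 := pow_le_pow_left₀ (mul_nonneg (l2_nonneg ℓ₀) (by positivity))
          ((le_div_iff₀ (by positivity)).mp hℓ₀) 2
      _ = 4 * l2 x ^ 2 := by ring
  have hQ : a₀ / (4 * γ) * ∑ i, piHat i * dot (X i) (restr S ℓ₀ - ℓ₀) ^ 2
      ≤ (a₀ - 1) * (r ^ 2 * l2 x ^ 2 / ((a₀ - 1) * κ ^ 4) * (ν / γ)) := by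
    have hn' : (0 : ℝ) < n := by exact_mod_cast hn
    have ha₀' : a₀ - 1 ≠ 0 := by linarith
    field_simp at hii ⊢
    nlinarith [mul_le_mul_of_nonneg_left hℓ₀sq (by positivity : 0 ≤ ν * r ^ 2),
      mul_le_mul_of_nonneg_right hii (by positivity : 0 ≤ κ ^ 4)]
  obtain ⟨hcompl, hdich⟩ := l1_restr_compl_le_and_mem_cone1_or_l1_le
    (A := r ^ 2 * l2 x ^ 2 / ((a₀ - 1) * κ ^ 4) * (ν / γ)) ha₀
    (by have := sub_pos.mpr ha₀; positivity) (hcone.trans (by linarith))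
  exact ⟨hcompl, hdich.imp_right fun h => h.trans_eq (by ring)⟩

/-- restricted cone and cross-polytope property of the dual minimizer. -/
theorem restricted_cone_and_cross_polytope
    (n d : ℕ) (hn : 1 ≤ n) (hd : 1 ≤ d) (a₀ γ ν κ r : ℝ)
    (ha₀ : 1 < a₀) (hγ : 0 < γ) (hν : 0 < ν) (hκ : 0 < κ) (hr0 : 0 ≤ r) (hr1 : r < 1)
    (x : Fin d → ℝ) (X : Fin n → Fin d → ℝ) (piHat : Fin n → ℝ) (hpi : ∀ i, 0 ≤ piHat i)
    (ℓ₀ : Fin d → ℝ) (hℓ₀ : l2 ℓ₀ ≤ 2 * l2 x / κ ^ 2)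
    (S : Finset (Fin d)) (ℓt : Fin d → ℝ) (hℓt : ℓt = restr S ℓ₀)
    (happrox : l2 (fun j => ℓt j - ℓ₀ j) ≤ r * l2 ℓ₀)
    (ℓHat : Fin d → ℝ)
    (hmin : ∀ ℓ : Fin d → ℝ,
      (1 / (4 * n)) * ∑ i, piHat i * dot (X i) ℓHat ^ 2 + dot x ℓHat + (γ / n) * l1 ℓHat
        ≤ (1 / (4 * n)) * ∑ i, piHat i * dot (X i) ℓ ^ 2 + dot x ℓ + (γ / n) * l1 ℓ)
    (hi : linf (fun j => (1 / (2 * n)) * ∑ i, piHat i * dot (X i) ℓ₀ * X i j + x j)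
        ≤ γ / (a₀ * n))
    (hii : (1 / (n : ℝ)) * ∑ i, piHat i * dot (X i) (fun j => ℓt j - ℓ₀ j) ^ 2
        ≤ ν * r ^ 2 * l2 ℓ₀ ^ 2 / (a₀ * n)) :
    l1 (restr Sᶜ (fun j => ℓHat j - ℓt j))
      ≤ (r ^ 2 * l2 x ^ 2 / ((a₀ - 1) * κ ^ 4)) * (ν / γ)
        + ((a₀ + 1) / (a₀ - 1)) * l1 (restr S (fun j => ℓHat j - ℓt j)) ∧
    ((fun j => ℓHat j - ℓt j) ∈ cone1 S (2 * (a₀ + 1) / (a₀ - 1)) ∨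
      l1 (fun j => ℓHat j - ℓt j)
        ≤ ((a₀ ^ 2 + 1) * r ^ 2 * l2 x ^ 2 / ((a₀ - 1) * κ ^ 4)) * (ν / γ)) :=
  restricted_cone_and_cross_polytope_general n d hn a₀ γ ν κ r ha₀ hγ hν hκ x X piHat hpi ℓ₀ hℓ₀ S
    ℓt hℓt ℓHat hmin hi hii
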